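/- Let \mu_1, \dots, \mu_r be measures on the unit circle with infinite support and let all n_j, m_j be nonnegative integers. The pair (\bm{n}, \bm{m}) is normal (i.e., there is a unique Laurent polynomial \Phi \in \operatorname{span}\{z^p : -|\bm{m}| \le p \le |\bm{n}|\} with leading coefficient of z^{|\bm{n}|} equal to 1 satisfying \int \Phi(w) w^{-p} d\mu_j(w) = 0 for p = -m_j, \dots, n_j - 1 and all j) if and only if the pair (\bm{m}, \bm{n}) is normal (same condition with the roles of \bm{n} and \bm{m} swapped). Moreover, in this case \Phi_{\bm{n},\bm{m}}^\sharp = \Phi_{\bm{m},\bm{n}}^*, where \Phi^\sharp(z) = \overline{\Phi(1/\bar{z})} and \Phi_{\bm{m},\bm{n}}^* is the solution normalized to have coefficient 1 on z^{-|\bm{n}|} satisfying the shifted orthogonality \int \Phi^*(w) w^{-p} d\mu_j(w) = 0 for p = -n_j + 1, \dots, m_j. -/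

import Mathlib

open MeasureTheory

/-- `c : ℤ → ℂ` is the coefficient sequence of the Hermite–Padé polynomial
`Φ_{n,m} ∈ span{z^p : -|m| ≤ p ≤ |n|}` with leading coefficient `1` at `z^{|n|}`,
satisfying `∫ Φ(w) w^{-p} dμⱼ = 0` for `p = -mⱼ, …, nⱼ - 1`. -/
def IsPhi {r : ℕ} (μ : Fin r → Measure ℂ) (n m : Fin r → ℕ) (c : ℤ → ℂ) : Prop :=
  (∀ k : ℤ, k ∉ Finset.Icc (-(∑ j, m j : ℤ)) ((∑ j, n j : ℤ)) → c k = 0) ∧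
  c ((∑ j, n j : ℤ)) = 1 ∧
  (∀ j, ∀ p ∈ Finset.Icc (-(m j : ℤ)) ((n j : ℤ) - 1),
    ∫ z, (∑ k ∈ Finset.Icc (-(∑ j, m j : ℤ)) ((∑ j, n j : ℤ)), c k * z ^ k) * z ^ (-p)
      ∂(μ j) = 0)

/-- `c : ℤ → ℂ` is the coefficient sequence of the starred Hermite–Padé polynomial
`Φ*_{n,m} ∈ span{z^p : -|m| ≤ p ≤ |n|}` with coefficient `1` at `z^{-|m|}`,
satisfying `∫ Φ*(w) w^{-p} dμⱼ = 0` for `p = -mⱼ + 1, …, nⱼ`. -/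
def IsPhiStar {r : ℕ} (μ : Fin r → Measure ℂ) (n m : Fin r → ℕ) (c : ℤ → ℂ) : Prop :=
  (∀ k : ℤ, k ∉ Finset.Icc (-(∑ j, m j : ℤ)) ((∑ j, n j : ℤ)) → c k = 0) ∧
  c (-(∑ j, m j : ℤ)) = 1 ∧
  (∀ j, ∀ p ∈ Finset.Icc (-(m j : ℤ) + 1) ((n j : ℤ)),
    ∫ z, (∑ k ∈ Finset.Icc (-(∑ j, m j : ℤ)) ((∑ j, n j : ℤ)), c k * z ^ k) * z ^ (-p)
      ∂(μ j) = 0)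

/-- The pair `(n, m)` is normal: there is a unique `Φ_{n,m}`. -/
def NormalPair {r : ℕ} (μ : Fin r → Measure ℂ) (n m : Fin r → ℕ) : Prop :=
  ∃! c : ℤ → ℂ, IsPhi μ n m c

open Finset ComplexConjugate

/-!
Both normality conditions concern square linear systems in the moments `∫ z ^ s dμⱼ`, and such a
system is uniquely solvable iff its homogeneous version (normalising coefficient set to `0`) has
only the trivial solution. On the circle `conj (∫ z ^ s dμ) = ∫ z ^ (-s) dμ`, so `Φ ↦ Φ^♯` carries
solutions of the system for `Φ_{n,m}` to solutions of the system for `Φ*_{m,n}` and back; in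
particular `Φ_{n,m}^♯ = Φ*_{m,n}` as soon as `Φ_{n,m}` is unique. Multiplication by `z` carries a
homogeneous solution for `Φ_{m,n}` (vanishing top coefficient) to a homogeneous solution for
`Φ*_{m,n}` (vanishing bottom coefficient). Hence if `(n, m)` is normal then so is `(m, n)`, and the
converse follows by symmetry.
-/

section LinearAlgebra

variable {K V ι : Type*} [Field K] [AddCommGroup V] [Module K V] [Fintype ι]

theorem existsUnique_iff_forall_eq_zero_of_finrank_eq (W : Submodule K V) [FiniteDimensional K W]
    (f : V →ₗ[K] K) (L : ι → V →ₗ[K] K) (hW : Module.finrank K W = Fintype.card ι + 1) :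
    (∃! v, (v ∈ W ∧ ∀ i, L i v = 0) ∧ f v = 1) ↔
      ∀ v, (v ∈ W ∧ ∀ i, L i v = 0) → f v = 0 → v = 0 := by
  let T : W →ₗ[K] K × (ι → K) := (f.prod (LinearMap.pi L)).domRestrict W
  have hT : ∀ v : W, T v = (f v, fun i => L i v) := fun v => rfl
  constructor
  · rintro ⟨v₀, ⟨⟨hv₀W, hv₀L⟩, hv₀f⟩, huniq⟩ v ⟨hvW, hvL⟩ hvf
    have h := huniq (v₀ + v) ⟨⟨W.add_mem hv₀W hvW, by simp [hv₀L, hvL]⟩, by simp [hv₀f, hvf]⟩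
    simpa using h
  · intro hker
    have hinj : Function.Injective T := by
      refine (injective_iff_map_eq_zero T).mpr fun v hv => Subtype.ext ?_
      simp only [hT, Prod.mk_eq_zero, funext_iff, Pi.zero_apply] at hv
      exact hker v ⟨v.2, hv.2⟩ hv.1
    have hdim : Module.finrank K W = Module.finrank K (K × (ι → K)) := by
      simp [hW, add_comm]
    obtain ⟨v, hv⟩ := (LinearMap.injective_iff_surjective_of_finrank_eq_finrank hdim).mp hinj (1, 0)
    simp only [hT, Prod.mk.injEq, funext_iff, Pi.zero_apply] at hv
    refine ⟨v, ⟨⟨v.2, hv.2⟩, hv.1⟩, fun w ⟨⟨hwW, hwL⟩, hwf⟩ => ?_⟩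
    rw [← sub_eq_zero]
    exact hker _ ⟨W.sub_mem hwW v.2, by simp [hwL, hv.2]⟩ (by simp [hwf, hv.1])

theorem mem_range_extendByZero_iff {R η : Type*} [Semiring R] {s : Set η} {c : η → R} :
    c ∈ LinearMap.range (Function.ExtendByZero.linearMap R ((↑) : s → η)) ↔ ∀ k ∉ s, c k = 0 := by
  constructor
  · rintro ⟨x, rfl⟩ k hk
    exact Function.extend_apply' _ _ _ fun ⟨k', hk'⟩ => hk (hk' ▸ k'.2)
  · intro hc
    refine ⟨fun k => c k, funext fun k => ?_⟩
    simp only [Function.ExtendByZero.linearMap_apply]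
    by_cases hk : k ∈ s
    · exact Subtype.val_injective.extend_apply _ _ (⟨k, hk⟩ : s)
    · rw [hc k hk]
      exact Function.extend_apply' _ _ _ fun ⟨k', hk'⟩ => hk (hk' ▸ k'.2)

end LinearAlgebra

theorem finsum_mul_eq_sum {α R : Type*} [NonUnitalNonAssocSemiring R] {S : Finset α} {c : α → R}
    (hc : ∀ k ∉ S, c k = 0) (w : α → R) : ∑ᶠ k, c k * w k = ∑ k ∈ S, c k * w k :=
  finsum_eq_sum_of_support_subset _ fun k hk => by_contra fun h => hk (by simp [hc k h])

section OrthogonalitySystem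

variable {ι : Type*} {M : ι → ℤ → ℂ} {a b e : ℤ} {lo hi : ι → ℤ}

/-- `c` is the coefficient sequence of a Laurent polynomial in `span {z ^ k : a ≤ k ≤ b}` that is
orthogonal to `z ^ p` for `lo j ≤ p ≤ hi j` with respect to the moment sequence `M j`. -/
def IsOrthogonal (M : ι → ℤ → ℂ) (a b : ℤ) (lo hi : ι → ℤ) (c : ℤ → ℂ) : Prop :=
  (∀ k ∉ Icc a b, c k = 0) ∧ ∀ j, ∀ p ∈ Icc (lo j) (hi j), ∑ᶠ k, c k * M j (k - p) = 0

theorem isOrthogonal_iff_sum {c : ℤ → ℂ} :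
    IsOrthogonal M a b lo hi c ↔ (∀ k ∉ Icc a b, c k = 0) ∧
      ∀ j, ∀ p ∈ Icc (lo j) (hi j), ∑ k ∈ Icc a b, c k * M j (k - p) = 0 :=
  and_congr_right fun hc => by simp only [finsum_mul_eq_sum hc]

def HasTrivialKernel (M : ι → ℤ → ℂ) (a b : ℤ) (lo hi : ι → ℤ) (e : ℤ) : Prop :=
  ∀ c, IsOrthogonal M a b lo hi c → c e = 0 → c = 0

theorem hasTrivialKernel_iff_existsUnique [Fintype ι]
    (hcard : #(Icc a b) = ∑ j, #(Icc (lo j) (hi j)) + 1) :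
    HasTrivialKernel M a b lo hi e ↔ ∃! c, IsOrthogonal M a b lo hi c ∧ c e = 1 := by
  let W := LinearMap.range
    (Function.ExtendByZero.linearMap ℂ ((↑) : ↑(Finset.Icc a b : Set ℤ) → ℤ))
  let L : (Σ j, Icc (lo j) (hi j)) → (ℤ → ℂ) →ₗ[ℂ] ℂ :=
    fun i => ∑ k ∈ Icc a b, M i.1 (k - i.2) • LinearMap.proj k
  have hiff : ∀ c, IsOrthogonal M a b lo hi c ↔ c ∈ W ∧ ∀ i, L i c = 0 := by
    intro c
    rw [isOrthogonal_iff_sum, mem_range_extendByZero_iff]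
    simp [L, Sigma.forall, mul_comm]
  have hW : Module.finrank ℂ W = Fintype.card (Σ j, Icc (lo j) (hi j)) + 1 := by
    rw [LinearMap.finrank_range_of_inj
      (Function.extend_injective Subtype.val_injective (0 : ℤ → ℂ))]
    simp [hcard]
  have h := existsUnique_iff_forall_eq_zero_of_finrank_eq W (LinearMap.proj e) L hW
  simp only [LinearMap.proj_apply, ← hiff] at h
  exact h.symm

/-- The coefficients of `Φ^♯(z) = conj (Φ (1 / conj z))` when `Φ(z) = ∑ c k z ^ k`. -/
def sharp (c : ℤ → ℂ) (k : ℤ) : ℂ := conj (c (-k))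

@[simp]
theorem sharp_sharp (c : ℤ → ℂ) : sharp (sharp c) = c := by
  funext k
  simp [sharp]

theorem IsOrthogonal.sharp (hM : ∀ j s, conj (M j s) = M j (-s)) {c : ℤ → ℂ}
    (hc : IsOrthogonal M a b lo hi c) : IsOrthogonal M (-b) (-a) (-hi) (-lo) (sharp c) := by
  refine ⟨fun k hk => ?_, fun j p hp => ?_⟩
  · have hk' : -k ∉ Icc a b := by simp only [mem_Icc] at hk ⊢; omega
    simp [_root_.sharp, hc.1 _ hk']
  · have hp' : -p ∈ Icc (lo j) (hi j) := by simp only [mem_Icc, Pi.neg_apply] at hp ⊢; omega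
    calc ∑ᶠ k, _root_.sharp c k * M j (k - p)
        = ∑ᶠ k, starAddEquiv (c k * M j (k - -p)) := by
          rw [← finsum_comp_equiv (Equiv.neg ℤ)]
          refine finsum_congr fun k => ?_
          simp only [_root_.sharp, Equiv.neg_apply, neg_neg, starAddEquiv_apply, star_mul',
            Complex.star_def, hM]
          ring_nf
      _ = 0 := by rw [← AddEquiv.map_finsum, hc.2 j (-p) hp', map_zero]

theorem HasTrivialKernel.of_sharp (hM : ∀ j s, conj (M j s) = M j (-s))
    (h : HasTrivialKernel M (-b) (-a) (-hi) (-lo) (-e)) : HasTrivialKernel M a b lo hi e := by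
  intro c hc he
  have h0 : sharp c = 0 := h _ (hc.sharp hM) (by simp [sharp, he])
  rw [← sharp_sharp c, h0]
  funext k
  simp [sharp]

theorem HasTrivialKernel.of_shift (h : HasTrivialKernel M a b (lo + 1) (hi + 1) a) :
    HasTrivialKernel M a b lo hi b := by
  intro c hc hb
  have hd : IsOrthogonal M a b (lo + 1) (hi + 1) (fun k => c (k - 1)) := by
    refine ⟨fun k hk => ?_, fun j p hp => ?_⟩
    · by_cases hk' : k - 1 = b
      · show c (k - 1) = 0
        rwa [hk']
      · exact hc.1 _ (by simp only [mem_Icc] at hk ⊢; omega)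
    · rw [← hc.2 j (p - 1) (by simp only [mem_Icc, Pi.add_apply, Pi.one_apply] at hp ⊢; omega)]
      refine Eq.trans (finsum_congr fun k => ?_)
        (finsum_comp_equiv (Equiv.subRight (1 : ℤ)) (f := fun k => c k * M j (k - (p - 1))))
      simp only [Equiv.subRight_apply]
      ring_nf
  have hd0 := h _ hd (hc.1 _ (by simp))
  funext k
  simpa using congrFun hd0 (k + 1)

end OrthogonalitySystem

section NormalIndices

variable {ι : Type*} [Fintype ι] {M : ι → ℤ → ℂ}

theorem card_Icc_neg_sum_sum (n m : ι → ℕ) :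
    #(Icc (-(∑ j, m j : ℤ)) (∑ j, n j : ℤ)) = ∑ j, #(Icc (-(m j : ℤ)) (n j - 1)) + 1 := by
  have hterm : ∀ j, #(Icc (-(m j : ℤ)) (n j - 1)) = n j + m j := fun j => by
    rw [Int.card_Icc]; omega
  rw [sum_congr rfl fun j _ => hterm j, sum_add_distrib, Int.card_Icc]
  simp only [← Nat.cast_sum]
  omega

theorem HasTrivialKernel.swap (hM : ∀ j s, conj (M j s) = M j (-s)) {n m : ι → ℕ}
    (h : HasTrivialKernel M (-(∑ j, m j : ℤ)) (∑ j, n j) (fun j => -(m j : ℤ))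
      (fun j => (n j : ℤ) - 1) (∑ j, n j)) :
    HasTrivialKernel M (-(∑ j, n j : ℤ)) (∑ j, m j) (fun j => -(n j : ℤ))
      (fun j => (m j : ℤ) - 1) (∑ j, m j) := by
  refine HasTrivialKernel.of_shift (HasTrivialKernel.of_sharp hM ?_)
  convert h using 2 <;> simp
  ring

end NormalIndices

section CircleMoments

variable {μ : Measure ℂ}

noncomputable def zpowMoment (μ : Measure ℂ) (s : ℤ) : ℂ := ∫ z, z ^ s ∂μ

theorem integrable_zpow_of_ae_norm_eq_one [IsFiniteMeasure μ] (hμ : ∀ᵐ z ∂μ, ‖z‖ = 1) (s : ℤ) :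
    Integrable (fun z : ℂ => z ^ s) μ :=
  Integrable.of_bound (by fun_prop : Measurable fun z : ℂ => z ^ s).aestronglyMeasurable 1
    (hμ.mono fun z hz => by rw [norm_zpow, hz, one_zpow])

theorem integral_sum_mul_zpow_neg [IsFiniteMeasure μ] (hμ : ∀ᵐ z ∂μ, ‖z‖ = 1) (S : Finset ℤ)
    (c : ℤ → ℂ) (p : ℤ) :
    ∫ z, (∑ k ∈ S, c k * z ^ k) * z ^ (-p) ∂μ = ∑ k ∈ S, c k * zpowMoment μ (k - p) := by
  have h : (fun z => (∑ k ∈ S, c k * z ^ k) * z ^ (-p)) =ᵐ[μ]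
      fun z => ∑ k ∈ S, c k * z ^ (k - p) := by
    filter_upwards [hμ] with z hz
    have hz0 : z ≠ 0 := norm_ne_zero_iff.mp (by rw [hz]; exact one_ne_zero)
    simp only [sum_mul, mul_assoc, ← zpow_add₀ hz0, sub_eq_add_neg]
  rw [integral_congr_ae h, integral_finsetSum _ fun k _ =>
    (integrable_zpow_of_ae_norm_eq_one hμ _).const_mul (c k)]
  simp only [integral_const_mul, zpowMoment]

theorem conj_zpowMoment (hμ : ∀ᵐ z ∂μ, ‖z‖ = 1) (s : ℤ) :
    conj (zpowMoment μ s) = zpowMoment μ (-s) := by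
  rw [zpowMoment, zpowMoment, ← integral_conj]
  refine integral_congr_ae (hμ.mono fun z hz => ?_)
  simp [map_zpow₀, ← Complex.inv_eq_conj hz, zpow_neg]

end CircleMoments

section HermitePade

variable {r : ℕ} {μ : Fin r → Measure ℂ} [∀ j, IsFiniteMeasure (μ j)] {n m : Fin r → ℕ}
  {c : ℤ → ℂ}

theorem isPhi_iff (hμ : ∀ j, ∀ᵐ z ∂μ j, ‖z‖ = 1) :
    IsPhi μ n m c ↔ IsOrthogonal (fun j => zpowMoment (μ j)) (-(∑ j, m j : ℤ)) (∑ j, n j)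
      (fun j => -(m j : ℤ)) (fun j => (n j : ℤ) - 1) c ∧ c (∑ j, n j) = 1 := by
  rw [isOrthogonal_iff_sum]
  simp only [IsPhi, integral_sum_mul_zpow_neg (hμ _)]
  tauto

theorem isPhiStar_iff (hμ : ∀ j, ∀ᵐ z ∂μ j, ‖z‖ = 1) :
    IsPhiStar μ n m c ↔ IsOrthogonal (fun j => zpowMoment (μ j)) (-(∑ j, m j : ℤ)) (∑ j, n j)
      (fun j => -(m j : ℤ) + 1) (fun j => (n j : ℤ)) c ∧ c (-(∑ j, m j : ℤ)) = 1 := by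
  rw [isOrthogonal_iff_sum]
  simp only [IsPhiStar, integral_sum_mul_zpow_neg (hμ _)]
  tauto

theorem normalPair_iff_hasTrivialKernel (hμ : ∀ j, ∀ᵐ z ∂μ j, ‖z‖ = 1) :
    NormalPair μ n m ↔ HasTrivialKernel (fun j => zpowMoment (μ j)) (-(∑ j, m j : ℤ))
      (∑ j, n j) (fun j => -(m j : ℤ)) (fun j => (n j : ℤ) - 1) (∑ j, n j) := by
  rw [NormalPair, hasTrivialKernel_iff_existsUnique (card_Icc_neg_sum_sum n m)]
  exact existsUnique_congr fun c => isPhi_iff hμ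

theorem NormalPair.swap (hμ : ∀ j, ∀ᵐ z ∂μ j, ‖z‖ = 1) (h : NormalPair μ n m) :
    NormalPair μ m n := by
  rw [normalPair_iff_hasTrivialKernel hμ] at h ⊢
  exact h.swap fun j => conj_zpowMoment (hμ j)

theorem IsPhiStar.isPhi_sharp (hμ : ∀ j, ∀ᵐ z ∂μ j, ‖z‖ = 1) (hc : IsPhiStar μ m n c) :
    IsPhi μ n m (sharp c) := by
  rw [isPhiStar_iff hμ] at hc
  rw [isPhi_iff hμ]
  refine ⟨?_, by simp [sharp, hc.2]⟩
  convert hc.1.sharp fun j => conj_zpowMoment (hμ j) using 2 <;> simp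
  ring

end HermitePade

theorem stmt15_general (r : ℕ) (μ : Fin r → Measure ℂ) [∀ j, IsFiniteMeasure (μ j)]
    (hcirc : ∀ j, ∀ᵐ z ∂(μ j), ‖z‖ = 1)
    (n m : Fin r → ℕ) :
    (NormalPair μ n m ↔ NormalPair μ m n) ∧
    (NormalPair μ n m →
      ∀ c c' : ℤ → ℂ, IsPhi μ n m c → IsPhiStar μ m n c' →
        ∀ k : ℤ, (starRingEnd ℂ) (c (-k)) = c' k) := by
  refine ⟨⟨NormalPair.swap hcirc, NormalPair.swap hcirc⟩, ?_⟩
  rintro ⟨c₀, -, huniq⟩ c c' hc hc' k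
  have hsharp : sharp c' = c := (huniq _ (hc'.isPhi_sharp hcirc)).trans (huniq _ hc).symm
  show sharp c k = c' k
  rw [← hsharp, sharp_sharp]

/-- `(n, m)` is normal iff `(m, n)` is normal, and in that case
`Φ_{n,m}^♯ = Φ*_{m,n}`, i.e. `conj (c (-k)) = c' k` for the respective coefficient
sequences. -/
theorem stmt15 (r : ℕ) (μ : Fin r → Measure ℂ) [∀ j, IsFiniteMeasure (μ j)]
    (hcirc : ∀ j, ∀ᵐ z ∂(μ j), ‖z‖ = 1)
    (hinf : ∀ j, {x : ℂ | ∀ U : Set ℂ, IsOpen U → x ∈ U → 0 < μ j U}.Infinite)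
    (n m : Fin r → ℕ) :
    (NormalPair μ n m ↔ NormalPair μ m n) ∧
    (NormalPair μ n m →
      ∀ c c' : ℤ → ℂ, IsPhi μ n m c → IsPhiStar μ m n c' →
        ∀ k : ℤ, (starRingEnd ℂ) (c (-k)) = c' k) :=
  stmt15_general r μ hcirc n m
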